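/- Let 1 < p ≤ 2 with conjugate exponent p* (1/p + 1/p* = 1), and let a, D ≥ 0 and δ, α, β₁, β₂ > 0 with β₁ < 1 satisfy a^p + αD ≤ δ^p + αβ₁ D + αβ₂ δ + αβ₂ a. Then a^p ≤ p*(δ^p + αβ₂ δ) + (αβ₂)^{p*} and D ≤ (δ^p + αβ₂ δ + (αβ₂)^{p*}/p*) / (α(1 − β₁)). -/

import Mathlib

/-! Young's inequality `b a ≤ a ^ p / p + b ^ q / q` absorbs the term `αβ₂ a` of the hypothesis
into `a ^ p`, leaving `a ^ p / q + α (1 - β₁) D ≤ δ ^ p + αβ₂ δ + (αβ₂) ^ q / q`;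
both bounds follow by dropping one of the two nonnegative terms on the left. -/

theorem Real.HolderConjugate.rpow_div_add_le_of_rpow_add_le_add_mul {p q a b c e : ℝ}
    (hpq : p.HolderConjugate q) (ha : 0 ≤ a) (hb : 0 ≤ b) (h : a ^ p + e ≤ c + b * a) :
    a ^ p / q + e ≤ c + b ^ q / q := by
  have hyoung : a * b ≤ a ^ p / p + b ^ q / q := Real.young_inequality_of_nonneg ha hb hpq
  have hsplit : a ^ p / q = a ^ p - a ^ p / p := by
    rw [div_eq_mul_inv, div_eq_mul_inv, eq_sub_iff_add_eq, ← mul_add, add_comm,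
      hpq.inv_add_inv_eq_one, mul_one]
  linarith

theorem rate_estimate_p_gt_one_general (p pstar a D δ α β₁ β₂ : ℝ)
    (hp : 1 < p) (hconj : 1 / p + 1 / pstar = 1)
    (ha : 0 ≤ a) (hD : 0 ≤ D) (hα : 0 < α)
    (hβ₂ : 0 < β₂) (hβ₁lt : β₁ < 1)
    (h : a ^ p + α * D ≤ δ ^ p + α * β₁ * D + α * β₂ * δ + α * β₂ * a) :
    a ^ p ≤ pstar * (δ ^ p + α * β₂ * δ) + (α * β₂) ^ pstar ∧
      D ≤ (δ ^ p + α * β₂ * δ + (α * β₂) ^ pstar / pstar) / (α * (1 - β₁)) := by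
  have hpq : p.HolderConjugate pstar :=
    Real.holderConjugate_iff.mpr ⟨hp, by simpa only [one_div] using hconj⟩
  have hq : 0 < pstar := hpq.symm.pos
  have hcoef : 0 < α * (1 - β₁) := mul_pos hα (by linarith)
  have hkey : a ^ p / pstar + α * (1 - β₁) * D ≤
      δ ^ p + α * β₂ * δ + (α * β₂) ^ pstar / pstar :=
    hpq.rpow_div_add_le_of_rpow_add_le_add_mul ha (by positivity) (by linarith)
  have hDterm : 0 ≤ α * (1 - β₁) * D := mul_nonneg hcoef.le hD
  have haterm : 0 ≤ a ^ p / pstar := by positivity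
  constructor
  · have hpow_le : a ^ p / pstar ≤ δ ^ p + α * β₂ * δ + (α * β₂) ^ pstar / pstar := by linarith
    rw [div_le_iff₀ hq] at hpow_le
    calc a ^ p ≤ (δ ^ p + α * β₂ * δ + (α * β₂) ^ pstar / pstar) * pstar := hpow_le
      _ = pstar * (δ ^ p + α * β₂ * δ) + (α * β₂) ^ pstar := by field_simp
  · rw [le_div_iff₀ hcoef]
    linarith

/-- The key elementary estimate in the convergence-rate proof for `p > 1`. -/
theorem rate_estimate_p_gt_one (p pstar a D δ α β₁ β₂ : ℝ)
    (hp : 1 < p) (hp2 : p ≤ 2) (hconj : 1 / p + 1 / pstar = 1)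
    (ha : 0 ≤ a) (hD : 0 ≤ D) (hδ : 0 < δ) (hα : 0 < α)
    (hβ₁ : 0 < β₁) (hβ₂ : 0 < β₂) (hβ₁lt : β₁ < 1)
    (h : a ^ p + α * D ≤ δ ^ p + α * β₁ * D + α * β₂ * δ + α * β₂ * a) :
    a ^ p ≤ pstar * (δ ^ p + α * β₂ * δ) + (α * β₂) ^ pstar ∧
      D ≤ (δ ^ p + α * β₂ * δ + (α * β₂) ^ pstar / pstar) / (α * (1 - β₁)) :=
  rate_estimate_p_gt_one_general p pstar a D δ α β₁ β₂ hp hconj ha hD hα hβ₂ hβ₁lt h
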